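/- arXiv:hep-th/9308148 — 9 statements merged into one kernel-verified Lean document; each statement's English description precedes it below -/
import Mathlib

section
/- Let R be an n²×n² matrix over a field k that is Hecke with parameter q. Let B be an associative unital k-algebra and let t = (t^i_j) and t' = (t'^i_j) be two n×n matrices of elements of B such that: (i) t satisfies the FRT relations for R; (ii) t' satisfies the FRT relations for R; (iii) the braid-statistics cross relations t'₁t₂ = R₂₁ t₂ t'₁ R hold, i.e. for all i,j,m,n: t'^i_m t^j_n = Σ_{a,b,c,d} R^j_b{}^i_a · t^b_d · t'^a_c · R^c_m{}^d_n. Then the matrix t'' := t + t' (entrywise sum) also satisfies the FRT relations for R. (This is the core of Theorem 2.1: the coaddition Δ̲t = t⊗1 + 1⊗t is an algebra homomorphism from A(R) to the braided tensor product A(R)⊗̲A(R).) -/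
open Matrix

/-- The permutation matrix `P^i_j{}^k_l = δ^i_l δ^k_j`; rows indexed by `(i,k)`,
columns by `(j,l)`. -/
def permMat (k : Type*) [Field k] (ι : Type*) [DecidableEq ι] :
    Matrix (ι × ι) (ι × ι) k :=
  fun p q => if p.1 = q.2 ∧ p.2 = q.1 then 1 else 0

/-- An `ι × ι` matrix `t` of elements of an algebra `B` satisfies the FRT relations
`R t₁ t₂ = t₂ t₁ R` for `R`, where we write `R^i_j{}^k_l = R (i,k) (j,l)`:
`Σ_{a,b} R^i_a{}^j_b t^a_m t^b_l = Σ_{a,b} t^j_b t^i_a R^a_m{}^b_l`. -/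
def FRT {k : Type*} [Field k] {B : Type*} [Ring B] [Algebra k B]
    {ι : Type*} [Fintype ι]
    (R : Matrix (ι × ι) (ι × ι) k) (t : ι → ι → B) : Prop :=
  ∀ i j m l : ι,
    (∑ a, ∑ b, R (i, j) (a, b) • (t a m * t b l)) =
    (∑ a, ∑ b, R (a, b) (m, l) • (t j b * t i a))

section aux
variable {k : Type*} [Field k] {B : Type*} [Ring B] [Algebra k B]
  {ι : Type*} [Fintype ι] [DecidableEq ι]

lemma permB_mul (M : Matrix (ι × ι) (ι × ι) B) :
    (permMat k ι).map (algebraMap k B) * M = of fun p q => M (p.2, p.1) q := by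
  ext p q
  rw [Matrix.mul_apply]
  rw [Finset.sum_eq_single ((p.2, p.1) : ι × ι)]
  · simp [permMat, Matrix.map_apply]
  · rintro ⟨b1, b2⟩ _ hb
    have : ¬(p.1 = b2 ∧ p.2 = b1) := by
      rintro ⟨h1, h2⟩; exact hb (by simp [← h1, ← h2])
    simp [permMat, Matrix.map_apply, this]
  · intro h; exact absurd (Finset.mem_univ _) h

lemma mul_permB (M : Matrix (ι × ι) (ι × ι) B) :
    M * (permMat k ι).map (algebraMap k B) = of fun p q => M p (q.2, q.1) := by
  ext p q
  rw [Matrix.mul_apply]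
  rw [Finset.sum_eq_single ((q.2, q.1) : ι × ι)]
  · simp [permMat, Matrix.map_apply]
  · rintro ⟨b1, b2⟩ _ hb
    have : ¬(b1 = q.2 ∧ b2 = q.1) := by
      rintro ⟨h1, h2⟩; exact hb (by simp [h1, h2])
    simp [permMat, Matrix.map_apply, this]
  · intro h; exact absurd (Finset.mem_univ _) h

lemma permB_permB :
    ((permMat k ι).map (algebraMap k B)) * ((permMat k ι).map (algebraMap k B)) = 1 := by
  rw [permB_mul]
  ext ⟨p1, p2⟩ ⟨q1, q2⟩
  simp [permMat, Matrix.map_apply, Matrix.one_apply, Prod.ext_iff, and_comm]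

lemma FRT_iff_matrix (R : Matrix (ι × ι) (ι × ι) k) (t : ι → ι → B) :
    FRT R t ↔
      R.map (algebraMap k B) * (of fun (p q : ι × ι) => t p.1 q.1 * t p.2 q.2) =
      (permMat k ι).map (algebraMap k B) *
        (of fun (p q : ι × ι) => t p.1 q.1 * t p.2 q.2) *
        (permMat k ι).map (algebraMap k B) * R.map (algebraMap k B) := by
  have L : ∀ i j m l : ι,
      (R.map (algebraMap k B) * (of fun (p q : ι × ι) => t p.1 q.1 * t p.2 q.2)) (i, j) (m, l)
        = ∑ a, ∑ b, R (i, j) (a, b) • (t a m * t b l) := by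
    intro i j m l
    rw [Matrix.mul_apply, Fintype.sum_prod_type]
    exact Finset.sum_congr rfl fun a _ => Finset.sum_congr rfl fun b _ => by
      rw [Matrix.map_apply, of_apply, Algebra.smul_def]
  have Rr : ∀ i j m l : ι,
      ((permMat k ι).map (algebraMap k B) *
        (of fun (p q : ι × ι) => t p.1 q.1 * t p.2 q.2) *
        (permMat k ι).map (algebraMap k B) * R.map (algebraMap k B)) (i, j) (m, l)
        = ∑ a, ∑ b, R (a, b) (m, l) • (t j b * t i a) := by
    intro i j m l
    rw [permB_mul, mul_permB, Matrix.mul_apply, Fintype.sum_prod_type]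
    exact Finset.sum_congr rfl fun a _ => Finset.sum_congr rfl fun b _ => by
      rw [Matrix.map_apply, Algebra.smul_def, Algebra.commutes]; simp [of_apply]
  constructor
  · intro h
    ext ⟨i, j⟩ ⟨m, l⟩
    rw [L, Rr]; exact h i j m l
  · intro h i j m l
    rw [← L, ← Rr, h]

end aux

lemma mix_abstract {k M : Type*} [Field k] [Ring M] [Algebra k M]
    (P Q D : M) (c : k)
    (hP : ∀ X : M, P * (P * X) = X)
    (hQQ : Q * Q = c • Q + 1) :
    (P * Q) * D + (P * Q) * (Q * D * Q)
      = P * D * P * (P * Q) + P * (Q * D * Q) * P * (P * Q) := by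
  have hQQX : ∀ X : M, Q * (Q * X) = c • (Q * X) + X := fun X => by
    rw [← mul_assoc, hQQ, add_mul, one_mul, smul_mul_assoc]
  simp only [mul_assoc, hP]
  rw [hQQX (D * Q), hQQ]
  simp only [mul_add, add_mul, mul_one, one_mul, mul_smul_comm, smul_mul_assoc, mul_assoc]
  abel

/-- **Theorem 2.1 (core).** If `R` is an `n²×n²` Hecke `R`-matrix with parameter `q`,
`t` and `t'` both satisfy the FRT relations for `R`, and the braid-statistics cross
relations `t'₁ t₂ = R₂₁ t₂ t'₁ R` hold, i.e.
`t'^i_m t^j_p = Σ R^j_b{}^i_a · t^b_d · t'^a_c · R^c_m{}^d_p`,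
then `t'' = t + t'` also satisfies the FRT relations for `R`. -/
theorem coaddition_quantum_matrices
    {k : Type*} [Field k] {B : Type*} [Ring B] [Algebra k B] {n : ℕ}
    (R : Matrix (Fin n × Fin n) (Fin n × Fin n) k) (q : k) (hq : q ≠ 0)
    (hHecke : (permMat k (Fin n) * R - q • 1) * (permMat k (Fin n) * R + q⁻¹ • 1) = 0)
    (t t' : Fin n → Fin n → B)
    (ht : FRT R t) (ht' : FRT R t')
    (hcross : ∀ i j m p : Fin n,
      t' i m * t j p =
        ∑ a, ∑ b, ∑ c, ∑ d,
          (R (j, i) (b, a) * R (c, d) (m, p)) • (t b d * t' a c)) :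
    FRT R (fun i j => t i j + t' i j) := by
  classical
  set P : Matrix (Fin n × Fin n) (Fin n × Fin n) B := (permMat k (Fin n)).map (algebraMap k B) with hPdef
  set Rb : Matrix (Fin n × Fin n) (Fin n × Fin n) B := R.map (algebraMap k B) with hRbdef
  set Q : Matrix (Fin n × Fin n) (Fin n × Fin n) B := P * Rb with hQdef
  have hPP : P * P = 1 := permB_permB
  have hPPX : ∀ X : Matrix (Fin n × Fin n) (Fin n × Fin n) B, P * (P * X) = X := fun X => by
    rw [← mul_assoc, hPP, one_mul]
  have hPQ : P * Q = Rb := by rw [hQdef, hPPX]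
  -- Hecke relation over B
  have hmaps : ∀ (c : k),
      ((c • (1 : Matrix (Fin n × Fin n) (Fin n × Fin n) k)).map (algebraMap k B))
        = c • (1 : Matrix (Fin n × Fin n) (Fin n × Fin n) B) := by
    intro c
    ext p r
    simp only [Matrix.map_apply, Matrix.smul_apply, Matrix.one_apply, smul_ite]
    split <;> simp [Algebra.smul_def]
  have hQQ : Q * Q = (q - q⁻¹) • Q + 1 := by
    have h0 := congrArg (fun M : Matrix (Fin n × Fin n) (Fin n × Fin n) k => M.map (algebraMap k B)) hHecke
    rw [Matrix.map_mul, Matrix.map_sub _ (map_sub _), Matrix.map_add _ (map_add _),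
      Matrix.map_mul, Matrix.map_zero _ (map_zero _), hmaps, hmaps] at h0
    -- h0 : (P * Rb - q•1) * (P * Rb + q⁻¹•1) = 0
    rw [← hPdef, ← hRbdef, ← hQdef] at h0
    have h1 : Q * Q + q⁻¹ • Q - (q • Q + 1) = 0 := by
      have e : (Q - q • 1) * (Q + q⁻¹ • 1)
          = Q * Q + q⁻¹ • Q - (q • Q + 1) := by
        rw [sub_mul, mul_add, mul_add, mul_smul_comm, mul_one, smul_mul_assoc, one_mul,
          smul_mul_assoc, one_mul, smul_smul, mul_inv_cancel₀ hq, one_smul]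
      rw [← e, h0]
    have h2 : Q * Q = q • Q + 1 - q⁻¹ • Q := by
      have := sub_eq_zero.mp h1
      rw [← this]; abel
    rw [h2, sub_smul]; abel
  set A : Matrix (Fin n × Fin n) (Fin n × Fin n) B :=
    of fun (p r : Fin n × Fin n) => t p.1 r.1 * t p.2 r.2 with hAdef
  set A2 : Matrix (Fin n × Fin n) (Fin n × Fin n) B :=
    of fun (p r : Fin n × Fin n) => t' p.1 r.1 * t' p.2 r.2 with hA2def
  set D : Matrix (Fin n × Fin n) (Fin n × Fin n) B :=
    of fun (p r : Fin n × Fin n) => t p.1 r.1 * t' p.2 r.2 with hDdef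
  set C : Matrix (Fin n × Fin n) (Fin n × Fin n) B :=
    of fun (p r : Fin n × Fin n) => t' p.1 r.1 * t p.2 r.2 with hCdef
  have hQapp : ∀ u v : Fin n × Fin n, Q u v = algebraMap k B (R (u.2, u.1) v) := by
    intro u v
    rw [hQdef, hPdef, hRbdef, permB_mul]
    simp [Matrix.map_apply]
  have hsm : ∀ (r s : k) (x : B),
      (r * s) • x = algebraMap k B r * x * algebraMap k B s := by
    intro r s x
    rw [Algebra.smul_def, _root_.map_mul, mul_assoc, Algebra.commutes s x, ← mul_assoc]
  have hCm : C = Q * D * Q := by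
    ext ⟨i, j⟩ ⟨m, p⟩
    have eR : (Q * D * Q) (i, j) (m, p)
        = ∑ x : Fin n × Fin n, ∑ y : Fin n × Fin n,
            algebraMap k B (R (j, i) x) * (t x.1 y.1 * t' x.2 y.2)
              * algebraMap k B (R (y.2, y.1) (m, p)) := by
      calc (Q * D * Q) (i, j) (m, p)
          = ∑ y, ∑ x, Q (i, j) x * D x y * Q y (m, p) := by
            rw [Matrix.mul_apply]
            exact Finset.sum_congr rfl fun y _ => by rw [Matrix.mul_apply, Finset.sum_mul]
        _ = ∑ x, ∑ y, Q (i, j) x * D x y * Q y (m, p) := Finset.sum_comm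
        _ = _ := by
            refine Finset.sum_congr rfl fun x _ => Finset.sum_congr rfl fun y _ => ?_
            rw [hQapp, hQapp, hDdef]
            rfl
    rw [eR]
    show t' i m * t j p = _
    rw [hcross i j m p]
    calc (∑ a, ∑ b, ∑ c, ∑ d,
            (R (j, i) (b, a) * R (c, d) (m, p)) • (t b d * t' a c))
        = ∑ a, ∑ b, ∑ c, ∑ d,
            algebraMap k B (R (j, i) (b, a)) * (t b d * t' a c)
              * algebraMap k B (R (c, d) (m, p)) := by
          exact Finset.sum_congr rfl fun a _ => Finset.sum_congr rfl fun b _ =>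
            Finset.sum_congr rfl fun c _ => Finset.sum_congr rfl fun d _ => hsm _ _ _
      _ = ∑ b, ∑ a, ∑ c, ∑ d,
            algebraMap k B (R (j, i) (b, a)) * (t b d * t' a c)
              * algebraMap k B (R (c, d) (m, p)) := Finset.sum_comm
      _ = ∑ b, ∑ a, ∑ d, ∑ c,
            algebraMap k B (R (j, i) (b, a)) * (t b d * t' a c)
              * algebraMap k B (R (c, d) (m, p)) := by
          exact Finset.sum_congr rfl fun b _ => Finset.sum_congr rfl fun a _ =>
            Finset.sum_comm
      _ = ∑ x : Fin n × Fin n, ∑ y : Fin n × Fin n,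
            algebraMap k B (R (j, i) x) * (t x.1 y.1 * t' x.2 y.2)
              * algebraMap k B (R (y.2, y.1) (m, p)) := by
          rw [Fintype.sum_prod_type]
          exact Finset.sum_congr rfl fun b _ => Finset.sum_congr rfl fun a _ => by
            rw [Fintype.sum_prod_type]
  have hA : Rb * A = P * A * P * Rb := by
    rw [hRbdef, hPdef, hAdef]
    exact (FRT_iff_matrix R t).mp ht
  have hA2 : Rb * A2 = P * A2 * P * Rb := by
    rw [hRbdef, hPdef, hA2def]
    exact (FRT_iff_matrix R t').mp ht'
  have hmix : Rb * D + Rb * C = P * D * P * Rb + P * C * P * Rb := by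
    rw [hCm, ← hPQ]
    exact mix_abstract P Q D (q - q⁻¹) hPPX hQQ
  rw [FRT_iff_matrix]
  rw [← hRbdef, ← hPdef]
  have hsplit : (of fun (p r : Fin n × Fin n) =>
      (fun i j => t i j + t' i j) p.1 r.1 * (fun i j => t i j + t' i j) p.2 r.2)
      = A + D + C + A2 := by
    rw [hAdef, hA2def, hDdef, hCdef]
    ext p r
    simp only [of_apply, Matrix.add_apply, mul_add, add_mul]
    abel
  rw [hsplit]
  simp only [Matrix.mul_add, Matrix.add_mul]
  rw [hA, hA2]
  simp only [add_assoc]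
  congr 1
  rw [← add_assoc, ← add_assoc, hmix, add_assoc]
end

section
/- Let R₁ be an m²×m² matrix and R₂ an n²×n² matrix over a field k, both Hecke with the same parameter q. Let B be an associative unital k-algebra and let x = (x^μ_i) and x' = (x'^μ_i) be two m×n rectangular matrices of elements of B such that: (i) x satisfies the rectangular FRT relations R₁x₁x₂ = x₂x₁R₂, i.e. Σ_{α,β} (R₁)^μ_α{}^ν_β x^α_i x^β_j = Σ_{a,b} x^ν_b x^μ_a (R₂)^a_i{}^b_j for all μ,ν,i,j; (ii) x' satisfies the same relations; (iii) the braid-statistics cross relations x'₁x₂ = (R₁)₂₁ x₂ x'₁ R₂ hold, i.e. x'^μ_i x^ν_j = Σ_{α,β,a,b} (R₁)^ν_β{}^μ_α · x^β_b · x'^α_a · (R₂)^a_i{}^b_j. Then x'' := x + x' (entrywise sum) also satisfies the rectangular FRT relations R₁x''₁x''₂ = x''₂x''₁R₂. (This is the coaddition claim of Proposition 4.1 for rectangular quantum matrices A(R₁:R₂).) -/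
open Matrix

set_option linter.unusedSectionVars false

/-- An `m × n` rectangular matrix `x` of elements of an algebra `B` satisfies the
rectangular FRT relations `R₁ x₁ x₂ = x₂ x₁ R₂`, where `R^i_j{}^k_l = R (i,k) (j,l)`:
`Σ_{α,β} (R₁)^μ_α{}^ν_β x^α_i x^β_j = Σ_{a,b} x^ν_b x^μ_a (R₂)^a_i{}^b_j`. -/
def RectFRT {k : Type*} [Field k] {B : Type*} [Ring B] [Algebra k B]
    {ι κ : Type*} [Fintype ι] [Fintype κ]
    (R1 : Matrix (ι × ι) (ι × ι) k) (R2 : Matrix (κ × κ) (κ × κ) k)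
    (x : ι → κ → B) : Prop :=
  ∀ (μ ν : ι) (i j : κ),
    (∑ α, ∑ β, R1 (μ, ν) (α, β) • (x α i * x β j)) =
    (∑ a, ∑ b, R2 (a, b) (i, j) • (x ν b * x μ a))

lemma perm_mul {k : Type*} [Field k] {ι : Type*} [DecidableEq ι] [Fintype ι]
    (R : Matrix (ι × ι) (ι × ι) k) (p q : ι × ι) :
    (permMat k ι * R) p q = R (p.2, p.1) q := by
  rw [Matrix.mul_apply, Fintype.sum_prod_type]
  simp [permMat, ite_and]

section Aux

variable {k : Type*} [Field k] {B : Type*} [Ring B] [Algebra k B]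
  {ι κ : Type*} [Fintype ι] [Fintype κ] [DecidableEq ι] [DecidableEq κ]

lemma mulK_apply (R1 : Matrix (ι × ι) (ι × ι) k)
    (y : Matrix (ι × ι) (κ × κ) B) (p : ι × ι) (r : κ × κ) :
    ((permMat k ι * R1).map (algebraMap k B) * y) p r
      = ∑ α, ∑ β, R1 (p.2, p.1) (α, β) • y (α, β) r := by
  rw [Matrix.mul_apply, Fintype.sum_prod_type]
  refine Finset.sum_congr rfl fun α _ => Finset.sum_congr rfl fun β _ => ?_
  rw [Matrix.map_apply, perm_mul, Algebra.smul_def]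

lemma Kmul_apply (R2 : Matrix (κ × κ) (κ × κ) k)
    (y : Matrix (ι × ι) (κ × κ) B) (p : ι × ι) (r : κ × κ) :
    (y * (permMat k κ * R2).map (algebraMap k B)) p r
      = ∑ a, ∑ b, R2 (a, b) r • y p (b, a) := by
  rw [Matrix.mul_apply, Fintype.sum_prod_type, Finset.sum_comm]
  refine Finset.sum_congr rfl fun a _ => Finset.sum_congr rfl fun b _ => ?_
  rw [Matrix.map_apply, perm_mul, Algebra.smul_def, Algebra.commutes]

/-- Matrix form of the rectangular FRT relations. -/
lemma rectFRT_iff_mat (R1 : Matrix (ι × ι) (ι × ι) k) (R2 : Matrix (κ × κ) (κ × κ) k)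
    (y z : ι → κ → B) :
    (∀ (μ ν : ι) (i j : κ),
        (∑ α, ∑ β, R1 (μ, ν) (α, β) • (y α i * z β j)) =
        (∑ a, ∑ b, R2 (a, b) (i, j) • (y ν b * z μ a))) ↔
      (permMat k ι * R1).map (algebraMap k B) *
          (Matrix.of fun (p : ι × ι) (r : κ × κ) => y p.1 r.1 * z p.2 r.2)
        = (Matrix.of fun (p : ι × ι) (r : κ × κ) => y p.1 r.1 * z p.2 r.2) *
            (permMat k κ * R2).map (algebraMap k B) := by
  constructor
  · intro h
    ext p r
    rw [mulK_apply, Kmul_apply]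
    exact h p.2 p.1 r.1 r.2
  · intro h μ ν i j
    have := congrFun (congrFun h (ν, μ)) (i, j)
    rw [mulK_apply, Kmul_apply] at this
    exact this

/-- The Hecke condition implies `Ř² = (q - q⁻¹) Ř + 1` after mapping into `B`. -/
lemma hecke_sq {q : k} (hq : q ≠ 0) {S : Matrix (ι × ι) (ι × ι) k}
    (h : (S - q • 1) * (S + q⁻¹ • 1) = 0) :
    S.map (algebraMap k B) * S.map (algebraMap k B)
      = (q - q⁻¹) • S.map (algebraMap k B) + 1 := by
  have hS : S * S = (q - q⁻¹) • S + 1 := by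
    have hq' : q * q⁻¹ = 1 := mul_inv_cancel₀ hq
    have expand : (S - q • 1) * (S + q⁻¹ • 1)
        = S * S - ((q - q⁻¹) • S + 1) := by
      simp only [sub_mul, mul_add, Matrix.smul_mul, Matrix.mul_smul, one_mul, mul_one,
        smul_smul, hq', inv_mul_cancel₀ hq, one_smul, sub_smul]
      abel
    rw [expand] at h
    exact sub_eq_zero.mp h
  have h2 : (S * S).map (algebraMap k B) = ((q - q⁻¹) • S + 1).map (algebraMap k B) := by
    rw [hS]
  rw [Matrix.map_mul] at h2
  rw [h2]
  ext p r
  simp only [Matrix.map_apply, Matrix.add_apply, Matrix.smul_apply, Matrix.one_apply,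
    smul_eq_mul, apply_ite (algebraMap k B), _root_.map_one, map_zero, _root_.map_mul]
  rw [Algebra.smul_def]
  simp [map_add, apply_ite (algebraMap k B)]

end Aux

/-- **Proposition 4.1 (coaddition for rectangular quantum matrices).** If `R₁, R₂` are
Hecke with the same parameter `q`, `x` and `x'` both satisfy the rectangular FRT
relations `R₁ x₁ x₂ = x₂ x₁ R₂`, and the braid-statistics cross relations
`x'₁ x₂ = (R₁)₂₁ x₂ x'₁ R₂` hold, i.e.
`x'^μ_i x^ν_j = Σ (R₁)^ν_β{}^μ_α · x^β_b · x'^α_a · (R₂)^a_i{}^b_j`,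
then `x'' = x + x'` also satisfies the rectangular FRT relations. -/
theorem coaddition_rectangular_quantum_matrices
    {k : Type*} [Field k] {B : Type*} [Ring B] [Algebra k B] {m n : ℕ}
    (R1 : Matrix (Fin m × Fin m) (Fin m × Fin m) k)
    (R2 : Matrix (Fin n × Fin n) (Fin n × Fin n) k)
    (q : k) (hq : q ≠ 0)
    (hHecke1 : (permMat k (Fin m) * R1 - q • 1) * (permMat k (Fin m) * R1 + q⁻¹ • 1) = 0)
    (hHecke2 : (permMat k (Fin n) * R2 - q • 1) * (permMat k (Fin n) * R2 + q⁻¹ • 1) = 0)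
    (x x' : Fin m → Fin n → B)
    (hx : RectFRT R1 R2 x) (hx' : RectFRT R1 R2 x')
    (hcross : ∀ (μ ν : Fin m) (i j : Fin n),
      x' μ i * x ν j =
        ∑ α, ∑ β, ∑ a, ∑ b,
          (R1 (ν, μ) (β, α) * R2 (a, b) (i, j)) • (x β b * x' α a)) :
    RectFRT R1 R2 (fun μ i => x μ i + x' μ i) := by
  classical
  set K1 := (permMat k (Fin m) * R1).map (algebraMap k B) with hK1def
  set K2 := (permMat k (Fin n) * R2).map (algebraMap k B) with hK2def
  set X  : Matrix (Fin m × Fin m) (Fin n × Fin n) B :=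
    Matrix.of fun p r => x p.1 r.1 * x p.2 r.2 with hXdef
  set X' : Matrix (Fin m × Fin m) (Fin n × Fin n) B :=
    Matrix.of fun p r => x' p.1 r.1 * x' p.2 r.2 with hX'def
  set A  : Matrix (Fin m × Fin m) (Fin n × Fin n) B :=
    Matrix.of fun p r => x p.1 r.1 * x' p.2 r.2 with hAdef
  set C  : Matrix (Fin m × Fin m) (Fin n × Fin n) B :=
    Matrix.of fun p r => x' p.1 r.1 * x p.2 r.2 with hCdef
  have hX : K1 * X = X * K2 := (rectFRT_iff_mat R1 R2 x x).mp hx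
  have hX' : K1 * X' = X' * K2 := (rectFRT_iff_mat R1 R2 x' x').mp hx'
  have hK1 : K1 * K1 = (q - q⁻¹) • K1 + 1 := hecke_sq hq hHecke1
  have hK2 : K2 * K2 = (q - q⁻¹) • K2 + 1 := hecke_sq hq hHecke2
  have hC : C = K1 * (A * K2) := by
    ext p r
    show x' p.1 r.1 * x p.2 r.2 = (K1 * (A * K2)) p r
    rw [hcross p.1 p.2 r.1 r.2, hK1def, mulK_apply]
    simp only [hK2def, Kmul_apply, hAdef, Matrix.of_apply, Finset.smul_sum, smul_smul]
    exact Finset.sum_comm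
  have hAC : K1 * (A + C) = (A + C) * K2 := by
    have e1 : K1 * (K1 * (A * K2)) = (q - q⁻¹) • (K1 * (A * K2)) + A * K2 := by
      rw [← Matrix.mul_assoc, hK1]
      simp [Matrix.add_mul, Matrix.smul_mul, Matrix.mul_assoc]
    have e2 : (K1 * (A * K2)) * K2 = (q - q⁻¹) • (K1 * (A * K2)) + K1 * A := by
      rw [Matrix.mul_assoc, Matrix.mul_assoc, hK2]
      simp [Matrix.mul_add, Matrix.mul_smul]
    rw [hC, Matrix.mul_add, Matrix.add_mul, e1, e2]
    abel
  have hfinal : K1 * Matrix.of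
      (fun (p : Fin m × Fin m) (r : Fin n × Fin n) =>
        (x p.1 r.1 + x' p.1 r.1) * (x p.2 r.2 + x' p.2 r.2))
      = Matrix.of (fun (p : Fin m × Fin m) (r : Fin n × Fin n) =>
        (x p.1 r.1 + x' p.1 r.1) * (x p.2 r.2 + x' p.2 r.2)) * K2 := by
    have hsum : Matrix.of
        (fun (p : Fin m × Fin m) (r : Fin n × Fin n) =>
          (x p.1 r.1 + x' p.1 r.1) * (x p.2 r.2 + x' p.2 r.2))
        = X + (A + C) + X' := by
      ext p r
      simp only [hXdef, hX'def, hAdef, hCdef, Matrix.of_apply, Matrix.add_apply]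
      noncomm_ring
    rw [hsum, Matrix.mul_add, Matrix.mul_add, Matrix.add_mul, Matrix.add_mul, hX, hX', hAC]
  exact (rectFRT_iff_mat R1 R2 (fun μ i => x μ i + x' μ i)
    (fun μ i => x μ i + x' μ i)).mpr hfinal
end

section
/- Let R be an invertible n²×n² matrix over a field k that is Hecke with parameter q. Then the n⁴×n⁴ multi-index matrices 𝐑 and 𝐑' built from R satisfy (𝐏𝐑 + 1)(𝐏𝐑' − 1) = 0, where 𝐏 is the permutation matrix on the two multi-index tensor factors and 1 is the identity matrix. (This is the Hecke-type compatibility condition between the braiding matrix 𝐑 and the relation matrix 𝐑' that makes A(R) a braided covector algebra.) -/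
open Matrix Kronecker

/-- The multi-index braiding matrix `𝐑^A_I{}^B_J = R^{j₀}_{b₀}{}^{i₀}_{a₀} ·
R^{a₁}_{i₁}{}^{b₁}_{j₁}`, rows indexed by `(A,B)`, columns by `(I,J)`,
where `R^i_j{}^k_l = R (i,k) (j,l)`. -/
def bigR {k : Type*} [Field k] {n : ℕ}
    (R : Matrix (Fin n × Fin n) (Fin n × Fin n) k) :
    Matrix ((Fin n × Fin n) × (Fin n × Fin n)) ((Fin n × Fin n) × (Fin n × Fin n)) k :=
  fun p q => R (q.2.1, q.1.1) (p.2.1, p.1.1) * R (p.1.2, p.2.2) (q.1.2, q.2.2)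

/-- The multi-index relation matrix `𝐑'^A_I{}^B_J = (R⁻¹)^{i₀}_{a₀}{}^{j₀}_{b₀} ·
R^{a₁}_{i₁}{}^{b₁}_{j₁}`, rows indexed by `(A,B)`, columns by `(I,J)`. -/
def bigR' {k : Type*} [Field k] {n : ℕ}
    (R Rinv : Matrix (Fin n × Fin n) (Fin n × Fin n) k) :
    Matrix ((Fin n × Fin n) × (Fin n × Fin n)) ((Fin n × Fin n) × (Fin n × Fin n)) k :=
  fun p q => Rinv (q.1.1, q.2.1) (p.1.1, p.2.1) * R (p.1.2, p.2.2) (q.1.2, q.2.2)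

section Aux

variable {k : Type*} [Field k] {ι : Type*} [DecidableEq ι] [Fintype ι]

lemma permMat_mul (M : Matrix (ι × ι) (ι × ι) k) :
    permMat k ι * M = M.submatrix Prod.swap id := by
  ext p q
  rw [Matrix.mul_apply]
  rw [Finset.sum_eq_single (Prod.swap p)]
  · simp [permMat]
  · intro r _ hr
    have : ¬ (p.1 = r.2 ∧ p.2 = r.1) := by
      rintro ⟨h1, h2⟩
      exact hr (by cases p; cases r; simp_all [Prod.swap])
    simp [permMat, this]
  · simp

lemma mul_permMat (M : Matrix (ι × ι) (ι × ι) k) :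
    M * permMat k ι = M.submatrix id Prod.swap := by
  ext p q
  rw [Matrix.mul_apply]
  rw [Finset.sum_eq_single (Prod.swap q)]
  · simp [permMat]
  · intro r _ hr
    have : ¬ (r.1 = q.2 ∧ r.2 = q.1) := by
      rintro ⟨h1, h2⟩
      exact hr (by cases q; cases r; simp_all [Prod.swap])
    simp [permMat, this]
  · simp

lemma permMat_mul_permMat : permMat k ι * permMat k ι = 1 := by
  rw [permMat_mul]
  ext p q
  cases p; cases q
  simp [permMat, Matrix.one_apply, Prod.ext_iff, and_comm, eq_comm]

end Aux

/-- The middle-swap reindexing of `(ι×ι)×(ι×ι)`. -/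
def midSwap (ι : Type*) : ((ι × ι) × (ι × ι)) ≃ ((ι × ι) × (ι × ι)) where
  toFun p := ((p.1.1, p.2.1), (p.1.2, p.2.2))
  invFun p := ((p.1.1, p.2.1), (p.1.2, p.2.2))
  left_inv p := rfl
  right_inv p := rfl

/-- If `R` is an invertible Hecke `R`-matrix with parameter `q`, then the multi-index
matrices `𝐑`, `𝐑'` satisfy `(𝐏𝐑 + 1)(𝐏𝐑' − 1) = 0`. -/
theorem bigR_hecke_covector_condition
    {k : Type*} [Field k] {n : ℕ}
    (R Rinv : Matrix (Fin n × Fin n) (Fin n × Fin n) k)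
    (hinv : R * Rinv = 1) (hinv' : Rinv * R = 1)
    (q : k) (hq : q ≠ 0)
    (hHecke : (permMat k (Fin n) * R - q • 1) * (permMat k (Fin n) * R + q⁻¹ • 1) = 0) :
    (permMat k (Fin n × Fin n) * bigR R + 1) *
      (permMat k (Fin n × Fin n) * bigR' R Rinv - 1) = 0 := by
  set S := permMat k (Fin n) * R with hS
  set Sinv := Rinv * permMat k (Fin n) with hSinv
  set c := q - q⁻¹ with hc
  -- inverses
  have hSS' : S * Sinv = 1 := by
    rw [hS, hSinv, Matrix.mul_assoc, ← Matrix.mul_assoc R, hinv, Matrix.one_mul,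
      permMat_mul_permMat]
  have hS'S : Sinv * S = 1 := by
    rw [hS, hSinv, Matrix.mul_assoc, ← Matrix.mul_assoc (permMat k (Fin n)),
      permMat_mul_permMat, Matrix.one_mul, hinv']
  -- the Hecke quadratic relation
  have hquad : S * S = c • S + 1 := by
    have h0 : (S - q • 1) * (S + q⁻¹ • 1)
        = S * S - (c • S + (1 : Matrix _ _ k)) := by
      simp only [sub_mul, mul_add, Matrix.smul_mul, Matrix.mul_smul, Matrix.one_mul,
        Matrix.mul_one, smul_smul, hc, sub_smul, mul_inv_cancel₀ hq, inv_mul_cancel₀ hq, one_smul]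
      abel
    rw [h0, sub_eq_zero] at hHecke
    exact hHecke
  -- transposed versions
  have hTT : Sᵀ * Sᵀ = c • Sᵀ + 1 := by
    have := congrArg Matrix.transpose hquad
    simpa [Matrix.transpose_mul, Matrix.transpose_add, Matrix.transpose_smul] using this
  have hTinvT : Sinvᵀ * Sᵀ = 1 := by
    have := congrArg Matrix.transpose hSS'
    simpa [Matrix.transpose_mul] using this
  have hTTinv : Sᵀ * Sinvᵀ = 1 := by
    have := congrArg Matrix.transpose hS'S
    simpa [Matrix.transpose_mul] using this
  -- Sᵀ = Sinvᵀ + c • 1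
  have hT_eq : Sᵀ = Sinvᵀ + c • 1 := by
    have h1 : Sᵀ * (Sᵀ - c • 1) = 1 := by
      rw [mul_sub, hTT, Matrix.mul_smul, Matrix.mul_one]; abel
    have h2 : Sinvᵀ = Sᵀ - c • 1 := by
      calc Sinvᵀ = Sinvᵀ * (Sᵀ * (Sᵀ - c • 1)) := by rw [h1, Matrix.mul_one]
        _ = (Sinvᵀ * Sᵀ) * (Sᵀ - c • 1) := by rw [Matrix.mul_assoc]
        _ = Sᵀ - c • 1 := by rw [hTinvT, Matrix.one_mul]
    rw [h2]; abel
  -- entrywise descriptions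
  have hSe : S = R.submatrix Prod.swap id := permMat_mul R
  have hSinve : Sinv = Rinv.submatrix id Prod.swap := mul_permMat Rinv
  -- identify the big matrices with submatrices of Kronecker products
  set σ := midSwap (Fin n) with hσ
  have hbig1 : permMat k (Fin n × Fin n) * bigR R = (Sᵀ ⊗ₖ S).submatrix σ σ := by
    rw [permMat_mul]
    ext p q
    simp [bigR, Matrix.submatrix_apply, Matrix.kronecker_apply, hσ, midSwap, hSe,
      Matrix.transpose_apply, Prod.swap]
  have hbig2 : permMat k (Fin n × Fin n) * bigR' R Rinv = (Sinvᵀ ⊗ₖ S).submatrix σ σ := by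
    rw [permMat_mul]
    ext p q
    simp [bigR', Matrix.submatrix_apply, Matrix.kronecker_apply, hσ, midSwap, hSe, hSinve,
      Matrix.transpose_apply, Prod.swap]
  -- the Kronecker identity
  have hkron : (Sᵀ ⊗ₖ S + 1) * (Sinvᵀ ⊗ₖ S - 1) = 0 := by
    rw [add_mul, mul_sub, mul_sub, Matrix.mul_one, Matrix.one_mul, Matrix.one_mul,
      ← Matrix.mul_kronecker_mul, hTTinv, hquad, Matrix.kronecker_add,
      Matrix.kronecker_smul, Matrix.one_kronecker_one, hT_eq, Matrix.add_kronecker,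
      Matrix.smul_kronecker]
    abel
  -- conclude
  have e1 : permMat k (Fin n × Fin n) * bigR R + 1 = (Sᵀ ⊗ₖ S + 1).submatrix σ σ := by
    rw [hbig1, ← Matrix.submatrix_one_equiv σ]
    ext p q
    simp [Matrix.submatrix_apply, Matrix.add_apply, Matrix.one_apply, EmbeddingLike.apply_eq_iff_eq]
  have e2 : permMat k (Fin n × Fin n) * bigR' R Rinv - 1
      = (Sinvᵀ ⊗ₖ S - 1).submatrix σ σ := by
    rw [hbig2, ← Matrix.submatrix_one_equiv σ]
    ext p q
    simp [Matrix.submatrix_apply, Matrix.sub_apply, Matrix.one_apply, EmbeddingLike.apply_eq_iff_eq]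
  rw [e1, e2, Matrix.submatrix_mul_equiv, hkron]
  ext p q
  simp [Matrix.submatrix_apply]
end

section
/- Let R be an invertible n²×n² matrix over a field k satisfying the quantum Yang–Baxter equation. Then the n⁴×n⁴ multi-index matrices 𝐑 and 𝐑' built from R satisfy the mixed Yang–Baxter relation 𝐑₁₂𝐑₁₃𝐑'₂₃ = 𝐑'₂₃𝐑₁₃𝐑₁₂ (as matrices acting on the threefold tensor power of the n²-dimensional multi-index space). -/
open Matrix

/-- `A` acting in the 1st and 2nd tensor factors of the threefold tensor power. -/
def lift12 {k : Type*} [Field k] {ι : Type*} [DecidableEq ι]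
    (A : Matrix (ι × ι) (ι × ι) k) : Matrix (ι × ι × ι) (ι × ι × ι) k :=
  fun p q => A (p.1, p.2.1) (q.1, q.2.1) * (if p.2.2 = q.2.2 then 1 else 0)

/-- `A` acting in the 1st and 3rd tensor factors of the threefold tensor power. -/
def lift13 {k : Type*} [Field k] {ι : Type*} [DecidableEq ι]
    (A : Matrix (ι × ι) (ι × ι) k) : Matrix (ι × ι × ι) (ι × ι × ι) k :=
  fun p q => A (p.1, p.2.2) (q.1, q.2.2) * (if p.2.1 = q.2.1 then 1 else 0)

/-- `A` acting in the 2nd and 3rd tensor factors of the threefold tensor power. -/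
def lift23 {k : Type*} [Field k] {ι : Type*} [DecidableEq ι]
    (A : Matrix (ι × ι) (ι × ι) k) : Matrix (ι × ι × ι) (ι × ι × ι) k :=
  fun p q => A (p.2.1, p.2.2) (q.2.1, q.2.2) * (if p.1 = q.1 then 1 else 0)

/-- The quantum Yang–Baxter equation `R₁₂R₁₃R₂₃ = R₂₃R₁₃R₁₂`. -/
def QYBE {k : Type*} [Field k] {ι : Type*} [DecidableEq ι] [Fintype ι]
    (R : Matrix (ι × ι) (ι × ι) k) : Prop :=
  lift12 R * lift13 R * lift23 R = lift23 R * lift13 R * lift12 R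

section Aux

open Kronecker

variable {k : Type*} [Field k] {ι : Type*} [DecidableEq ι] [Fintype ι]

/-- The flip `PMP` of a matrix on a twofold tensor square. -/
def flipM (M : Matrix (ι × ι) (ι × ι) k) : Matrix (ι × ι) (ι × ι) k :=
  fun p q => M (p.2, p.1) (q.2, q.1)

/-- Cyclic shuffle of the three tensor factors. -/
def cyc (ι : Type*) : (ι × ι × ι) ≃ (ι × ι × ι) where
  toFun p := (p.2.1, p.2.2, p.1)
  invFun p := (p.2.2, p.1, p.2.1)
  left_inv := by rintro ⟨a, b, c⟩; rfl
  right_inv := by rintro ⟨a, b, c⟩; rfl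

lemma lift12_sub_cyc (M : Matrix (ι × ι) (ι × ι) k) :
    (lift12 M).submatrix (cyc ι) (cyc ι) = lift23 M := rfl

lemma lift13_sub_cyc (M : Matrix (ι × ι) (ι × ι) k) :
    (lift13 M).submatrix (cyc ι) (cyc ι) = lift12 (flipM M) := rfl

lemma lift23_sub_cyc (M : Matrix (ι × ι) (ι × ι) k) :
    (lift23 M).submatrix (cyc ι) (cyc ι) = lift13 (flipM M) := rfl

lemma lift12_transpose (M : Matrix (ι × ι) (ι × ι) k) :
    (lift12 M)ᵀ = lift12 Mᵀ := by
  ext p q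
  simp only [transpose_apply, lift12]
  congr 1
  exact if_congr eq_comm rfl rfl

lemma lift13_transpose (M : Matrix (ι × ι) (ι × ι) k) :
    (lift13 M)ᵀ = lift13 Mᵀ := by
  ext p q
  simp only [transpose_apply, lift13]
  congr 1
  exact if_congr eq_comm rfl rfl

lemma lift23_transpose (M : Matrix (ι × ι) (ι × ι) k) :
    (lift23 M)ᵀ = lift23 Mᵀ := by
  ext p q
  simp only [transpose_apply, lift23]
  congr 1
  exact if_congr eq_comm rfl rfl

lemma QYBE.transpose {R : Matrix (ι × ι) (ι × ι) k} (h : QYBE R) : QYBE Rᵀ := by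
  unfold QYBE at h ⊢
  rw [← lift12_transpose, ← lift13_transpose, ← lift23_transpose,
    ← transpose_mul, ← transpose_mul, ← transpose_mul, ← transpose_mul]
  congr 1
  rw [← mul_assoc, ← mul_assoc, h]

/-- Conjugating the QYBE by the cyclic shuffle. -/
lemma QYBE.star_rel {U : Matrix (ι × ι) (ι × ι) k} (h : QYBE U) :
    lift23 U * lift12 (flipM U) * lift13 (flipM U)
      = lift13 (flipM U) * lift12 (flipM U) * lift23 U := by
  calc lift23 U * lift12 (flipM U) * lift13 (flipM U)
      = (lift12 U).submatrix (cyc ι) (cyc ι) * (lift13 U).submatrix (cyc ι) (cyc ι) *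
          (lift23 U).submatrix (cyc ι) (cyc ι) := by
        rw [lift12_sub_cyc, lift13_sub_cyc, lift23_sub_cyc]
    _ = (lift12 U * lift13 U * lift23 U).submatrix (cyc ι) (cyc ι) := by
        rw [submatrix_mul_equiv, submatrix_mul_equiv]
    _ = (lift23 U * lift13 U * lift12 U).submatrix (cyc ι) (cyc ι) := by rw [h]
    _ = (lift23 U).submatrix (cyc ι) (cyc ι) * (lift13 U).submatrix (cyc ι) (cyc ι) *
          (lift12 U).submatrix (cyc ι) (cyc ι) := by
        rw [submatrix_mul_equiv, submatrix_mul_equiv]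
    _ = lift13 (flipM U) * lift12 (flipM U) * lift23 U := by
        rw [lift12_sub_cyc, lift13_sub_cyc, lift23_sub_cyc]

lemma lift23_eq_kron (A : Matrix (ι × ι) (ι × ι) k) :
    lift23 A = (1 : Matrix ι ι k) ⊗ₖ A := by
  ext ⟨p1, p2, p3⟩ ⟨q1, q2, q3⟩
  simp [lift23, Matrix.one_apply, mul_comm]

lemma lift23_mul (A B : Matrix (ι × ι) (ι × ι) k) :
    lift23 (A * B) = lift23 A * lift23 B := by
  rw [lift23_eq_kron, lift23_eq_kron, lift23_eq_kron, ← Matrix.mul_kronecker_mul, one_mul]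

lemma lift23_one : lift23 (1 : Matrix (ι × ι) (ι × ι) k) = 1 := by
  rw [lift23_eq_kron, Matrix.one_kronecker_one]

/-- The 0-slot mixed relation. -/
lemma zero_slot {R Rinv : Matrix (ι × ι) (ι × ι) k}
    (hinv : R * Rinv = 1) (hinv' : Rinv * R = 1) (h : QYBE R) :
    lift12 (flipM Rᵀ) * lift13 (flipM Rᵀ) * lift23 Rinvᵀ
      = lift23 Rinvᵀ * lift13 (flipM Rᵀ) * lift12 (flipM Rᵀ) := by
  have hstar := (h.transpose).star_rel
  set A := lift23 Rᵀ with hA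
  set A' := lift23 Rinvᵀ with hA'
  set X := lift12 (flipM Rᵀ) with hX
  set Y := lift13 (flipM Rᵀ) with hY
  have hAA' : A * A' = 1 := by
    rw [hA, hA', ← lift23_mul, ← transpose_mul, hinv', transpose_one, lift23_one]
  have hA'A : A' * A = 1 := by
    rw [hA, hA', ← lift23_mul, ← transpose_mul, hinv, transpose_one, lift23_one]
  -- hstar : A * X * Y = Y * X * A
  have key : A * (X * Y * A') = Y * X := by
    rw [← mul_assoc, ← mul_assoc, hstar, mul_assoc, hAA', mul_one]
  calc X * Y * A' = (A' * A) * (X * Y * A') := by rw [hA'A, one_mul]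
    _ = A' * (A * (X * Y * A')) := by rw [mul_assoc]
    _ = A' * (Y * X) := by rw [key]
    _ = A' * Y * X := by rw [mul_assoc]

end Aux

section KronSplit

open Kronecker

variable {k : Type*} [Field k] {γ : Type*} [DecidableEq γ] [Fintype γ]

/-- Unzip a pair of pairs. -/
def unzipP (γ : Type*) : ((γ × γ) × (γ × γ)) ≃ ((γ × γ) × (γ × γ)) where
  toFun p := ((p.1.1, p.2.1), (p.1.2, p.2.2))
  invFun p := ((p.1.1, p.2.1), (p.1.2, p.2.2))
  left_inv := by rintro ⟨⟨a, b⟩, ⟨c, d⟩⟩; rfl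
  right_inv := by rintro ⟨⟨a, b⟩, ⟨c, d⟩⟩; rfl

/-- Unzip a triple of pairs. -/
def unzipT (γ : Type*) :
    ((γ × γ) × (γ × γ) × (γ × γ)) ≃ ((γ × γ × γ) × (γ × γ × γ)) where
  toFun p := ((p.1.1, p.2.1.1, p.2.2.1), (p.1.2, p.2.1.2, p.2.2.2))
  invFun p := ((p.1.1, p.2.1), ((p.1.2.1, p.2.2.1), (p.1.2.2, p.2.2.2)))
  left_inv := by rintro ⟨⟨a, b⟩, ⟨c, d⟩, ⟨e, f⟩⟩; rfl
  right_inv := by rintro ⟨⟨a, b, c⟩, ⟨d, e, f⟩⟩; rfl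

lemma lift12_kron_sub (A B : Matrix (γ × γ) (γ × γ) k) :
    lift12 ((A ⊗ₖ B).submatrix (unzipP γ) (unzipP γ))
      = ((lift12 A) ⊗ₖ (lift12 B)).submatrix (unzipT γ) (unzipT γ) := by
  ext ⟨⟨p11, p12⟩, ⟨p21, p22⟩, ⟨p31, p32⟩⟩ ⟨⟨q11, q12⟩, ⟨q21, q22⟩, ⟨q31, q32⟩⟩
  simp only [lift12, submatrix_apply, kroneckerMap_apply, unzipP, unzipT, Equiv.coe_fn_mk,
    Prod.mk.injEq]
  split_ifs <;> simp_all <;> ring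

lemma lift13_kron_sub (A B : Matrix (γ × γ) (γ × γ) k) :
    lift13 ((A ⊗ₖ B).submatrix (unzipP γ) (unzipP γ))
      = ((lift13 A) ⊗ₖ (lift13 B)).submatrix (unzipT γ) (unzipT γ) := by
  ext ⟨⟨p11, p12⟩, ⟨p21, p22⟩, ⟨p31, p32⟩⟩ ⟨⟨q11, q12⟩, ⟨q21, q22⟩, ⟨q31, q32⟩⟩
  simp only [lift13, submatrix_apply, kroneckerMap_apply, unzipP, unzipT, Equiv.coe_fn_mk,
    Prod.mk.injEq]
  split_ifs <;> simp_all <;> ring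

lemma lift23_kron_sub (A B : Matrix (γ × γ) (γ × γ) k) :
    lift23 ((A ⊗ₖ B).submatrix (unzipP γ) (unzipP γ))
      = ((lift23 A) ⊗ₖ (lift23 B)).submatrix (unzipT γ) (unzipT γ) := by
  ext ⟨⟨p11, p12⟩, ⟨p21, p22⟩, ⟨p31, p32⟩⟩ ⟨⟨q11, q12⟩, ⟨q21, q22⟩, ⟨q31, q32⟩⟩
  simp only [lift23, submatrix_apply, kroneckerMap_apply, unzipP, unzipT, Equiv.coe_fn_mk,
    Prod.mk.injEq]
  split_ifs <;> simp_all <;> ring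

end KronSplit

section BigRep

open Kronecker

variable {k : Type*} [Field k] {n : ℕ}

lemma bigR_rep (R : Matrix (Fin n × Fin n) (Fin n × Fin n) k) :
    bigR R = ((flipM Rᵀ) ⊗ₖ R).submatrix (unzipP (Fin n)) (unzipP (Fin n)) := by
  ext ⟨⟨a0, a1⟩, ⟨b0, b1⟩⟩ ⟨⟨i0, i1⟩, ⟨j0, j1⟩⟩
  rfl

lemma bigR'_rep (R Rinv : Matrix (Fin n × Fin n) (Fin n × Fin n) k) :
    bigR' R Rinv = (Rinvᵀ ⊗ₖ R).submatrix (unzipP (Fin n)) (unzipP (Fin n)) := by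
  ext ⟨⟨a0, a1⟩, ⟨b0, b1⟩⟩ ⟨⟨i0, i1⟩, ⟨j0, j1⟩⟩
  rfl

end BigRep

open Kronecker in
/-- If `R` is invertible and satisfies the QYBE, then the multi-index matrices satisfy
the mixed Yang–Baxter relation `𝐑₁₂𝐑₁₃𝐑'₂₃ = 𝐑'₂₃𝐑₁₃𝐑₁₂`. -/
theorem bigR_mixed_QYBE_one
    {k : Type*} [Field k] {n : ℕ}
    (R Rinv : Matrix (Fin n × Fin n) (Fin n × Fin n) k)
    (hinv : R * Rinv = 1) (hinv' : Rinv * R = 1)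
    (hQYBE : QYBE R) :
    lift12 (bigR R) * lift13 (bigR R) * lift23 (bigR' R Rinv) =
      lift23 (bigR' R Rinv) * lift13 (bigR R) * lift12 (bigR R) := by
  have h0 := zero_slot hinv hinv' hQYBE
  calc lift12 (bigR R) * lift13 (bigR R) * lift23 (bigR' R Rinv)
      = ((lift12 (flipM Rᵀ) * lift13 (flipM Rᵀ) * lift23 Rinvᵀ) ⊗ₖ
          (lift12 R * lift13 R * lift23 R)).submatrix (unzipT (Fin n)) (unzipT (Fin n)) := by
        rw [bigR_rep, bigR'_rep, lift12_kron_sub, lift13_kron_sub, lift23_kron_sub,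
          submatrix_mul_equiv, submatrix_mul_equiv, ← Matrix.mul_kronecker_mul,
          ← Matrix.mul_kronecker_mul]
    _ = ((lift23 Rinvᵀ * lift13 (flipM Rᵀ) * lift12 (flipM Rᵀ)) ⊗ₖ
          (lift23 R * lift13 R * lift12 R)).submatrix (unzipT (Fin n)) (unzipT (Fin n)) := by
        rw [h0, hQYBE]
    _ = lift23 (bigR' R Rinv) * lift13 (bigR R) * lift12 (bigR R) := by
        rw [bigR_rep, bigR'_rep, lift12_kron_sub, lift13_kron_sub, lift23_kron_sub,
          submatrix_mul_equiv, submatrix_mul_equiv, ← Matrix.mul_kronecker_mul,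
          ← Matrix.mul_kronecker_mul]
end

section
/- Let R be an invertible n²×n² matrix over a field k. Then the n⁴×n⁴ multi-index matrices 𝐑 and 𝐑' built from R automatically satisfy 𝐑'₂₁𝐑 = 𝐑₂₁𝐑', where 𝐑₂₁ := 𝐏𝐑𝐏 and 𝐑'₂₁ := 𝐏𝐑'𝐏 with 𝐏 the permutation matrix on multi-indices. (This is the condition providing the braided antipode for the coaddition on A(R).) -/
open Matrix

lemma permMat_apply' {k : Type*} [Field k] {ι : Type*} [DecidableEq ι] (p q : ι × ι) :
    permMat k ι p q = if q = (p.2, p.1) then 1 else 0 := by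
  simp [permMat, Prod.ext_iff, and_comm, eq_comm]

lemma perm_conj {k : Type*} [Field k] {ι : Type*} [DecidableEq ι] [Fintype ι]
    (X : Matrix (ι × ι) (ι × ι) k) :
    permMat k ι * X * permMat k ι = Matrix.of (fun p q => X (p.2, p.1) (q.2, q.1)) := by
  ext p q
  simp only [Matrix.mul_apply, permMat_apply', Matrix.of_apply]
  rw [Finset.sum_eq_single (q.2, q.1)]
  · simp only [if_pos rfl, mul_one]
    rw [Finset.sum_eq_single (p.2, p.1)]
    · simp
    · intro b _ hb; rw [if_neg (by simpa [eq_comm] using hb)]; ring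
    · simp
  · intro b _ hb
    rw [if_neg (fun h => hb (by simp [h]))]
    ring
  · simp

/-- For any invertible `R`, the multi-index matrices automatically satisfy
`𝐑'₂₁𝐑 = 𝐑₂₁𝐑'`, where `X₂₁ = 𝐏X𝐏` (the braided-antipode condition). -/
theorem bigR'_21_bigR_eq_bigR_21_bigR'
    {k : Type*} [Field k] {n : ℕ}
    (R Rinv : Matrix (Fin n × Fin n) (Fin n × Fin n) k)
    (hinv : R * Rinv = 1) (hinv' : Rinv * R = 1) :
    (permMat k (Fin n × Fin n) * bigR' R Rinv * permMat k (Fin n × Fin n)) * bigR R =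
      (permMat k (Fin n × Fin n) * bigR R * permMat k (Fin n × Fin n)) * bigR' R Rinv := by
  rw [perm_conj, perm_conj]
  ext p q
  obtain ⟨A, B⟩ := p
  obtain ⟨I, J⟩ := q
  simp only [Matrix.mul_apply, Matrix.of_apply]
  have key1 : (∑ r : (Fin n × Fin n) × (Fin n × Fin n),
        bigR' R Rinv (B, A) (r.2, r.1) * bigR R r (I, J))
      = (∑ x : Fin n × Fin n, R (J.1, I.1) x * Rinv x (B.1, A.1)) *
        (∑ y : Fin n × Fin n, R (B.2, A.2) y * R (y.2, y.1) (I.2, J.2)) := by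
    trans (∑ z : (Fin n × Fin n) × (Fin n × Fin n),
        (R (J.1, I.1) z.1 * Rinv z.1 (B.1, A.1)) *
        (R (B.2, A.2) z.2 * R (z.2.2, z.2.1) (I.2, J.2)))
    · apply Fintype.sum_equiv
        (⟨fun r => ((r.2.1, r.1.1), (r.2.2, r.1.2)),
          fun s => ((s.1.2, s.2.2), (s.1.1, s.2.1)),
          fun r => rfl, fun s => rfl⟩ : _ ≃ _)
      intro r
      simp only [bigR, bigR', Equiv.coe_fn_mk]
      ring
    · rw [Fintype.sum_prod_type]
      dsimp only
      rw [← Finset.sum_mul_sum]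
  have key2 : (∑ r : (Fin n × Fin n) × (Fin n × Fin n),
        bigR R (B, A) (r.2, r.1) * bigR' R Rinv r (I, J))
      = (∑ x : Fin n × Fin n, Rinv (I.1, J.1) x * R x (A.1, B.1)) *
        (∑ y : Fin n × Fin n, R (B.2, A.2) y * R (y.2, y.1) (I.2, J.2)) := by
    trans (∑ z : (Fin n × Fin n) × (Fin n × Fin n),
        (Rinv (I.1, J.1) z.1 * R z.1 (A.1, B.1)) *
        (R (B.2, A.2) z.2 * R (z.2.2, z.2.1) (I.2, J.2)))
    · apply Fintype.sum_equiv
        (⟨fun r => ((r.1.1, r.2.1), (r.2.2, r.1.2)),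
          fun s => ((s.1.1, s.2.2), (s.1.2, s.2.1)),
          fun r => rfl, fun s => rfl⟩ : _ ≃ _)
      intro r
      simp only [bigR, bigR', Equiv.coe_fn_mk]
      ring
    · rw [Fintype.sum_prod_type]
      dsimp only
      rw [← Finset.sum_mul_sum]
  rw [key1, key2]
  congr 1
  rw [← Matrix.mul_apply, ← Matrix.mul_apply, hinv, hinv']
  simp [Matrix.one_apply, Prod.ext_iff, and_comm]
end

section
/- Let R be an n²×n² matrix over a field k, B an associative unital k-algebra, t = (t^i_j) an n×n matrix of elements of B satisfying the FRT relations for R, and d = (d^i_j) an n×n matrix of elements of B satisfying the braided Heisenberg–Weyl cross relations: d^{i₁}_{i₀} t^{j₀}_{j₁} − Σ_{a,b,c,e} R^a_{i₀}{}^{j₀}_b · t^b_c · R^c_{j₁}{}^{i₁}_e · d^e_a = δ^{i₁}_{j₁} δ^{j₀}_{i₀} for all indices. Define D^{i₁}_{i₀} := Σ_a t^a_{i₀} d^{i₁}_a. Then for all indices: D^{i₁}_{i₀} t^{j₀}_{j₁} = δ^{i₁}_{j₁} t^{j₀}_{i₀} + Σ_{a,b,c,e} t^{j₀}_a · D^b_c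 · R^c_{i₀}{}^a_e · R^e_{j₁}{}^{i₁}_b. (This is the cross-relation between the left-invariant vector fields and the quantum matrix coordinates established in the proof of Proposition 3.4.) -/
open Matrix

/-- The cross relation between the left-invariant vector fields
`D^{i₁}_{i₀} = Σ_a t^a_{i₀} d^{i₁}_a` and the quantum matrix coordinates `t`:
`D^{i₁}_{i₀} t^{j₀}_{j₁} = δ^{i₁}_{j₁} t^{j₀}_{i₀} + Σ t^{j₀}_a D^b_c R^c_{i₀}{}^a_e R^e_{j₁}{}^{i₁}_b`
(from the proof of Proposition 3.4). -/
theorem left_invariant_fields_cross_relation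
    {k : Type*} [Field k] {B : Type*} [Ring B] [Algebra k B] {n : ℕ}
    (R : Matrix (Fin n × Fin n) (Fin n × Fin n) k)
    (t d : Fin n → Fin n → B)
    (ht : FRT R t)
    (hweyl : ∀ i₀ i₁ j₀ j₁ : Fin n,
      d i₁ i₀ * t j₀ j₁ -
        (∑ a, ∑ b, ∑ c, ∑ e,
          (R (a, j₀) (i₀, b) * R (c, i₁) (j₁, e)) • (t b c * d e a)) =
      if i₁ = j₁ ∧ j₀ = i₀ then 1 else 0)
    (D : Fin n → Fin n → B)
    (hD : ∀ u l, D u l = ∑ a, t a l * d u a) :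
    ∀ i₀ i₁ j₀ j₁ : Fin n,
      D i₁ i₀ * t j₀ j₁ =
        (if i₁ = j₁ then t j₀ i₀ else 0) +
          (∑ a, ∑ b, ∑ c, ∑ e,
            (R (c, a) (i₀, e) * R (e, i₁) (j₁, b)) • (t j₀ a * D b c)) := by
  intro i₀ i₁ j₀ j₁
  classical
  have expand5 : ∀ f : Fin n → Fin n → Fin n → Fin n → Fin n → B,
      (∑ x : Fin n × Fin n × Fin n × Fin n × Fin n,
        f x.1 x.2.1 x.2.2.1 x.2.2.2.1 x.2.2.2.2) =
      ∑ a, ∑ b, ∑ c, ∑ dd, ∑ e, f a b c dd e := fun f => by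
    simp [Fintype.sum_prod_type]
  have reorder1 : ∀ f : Fin n → Fin n → Fin n → Fin n → Fin n → B,
      (∑ a, ∑ p, ∑ b, ∑ c, ∑ e, f a p b c e) =
      ∑ p, ∑ c, ∑ e, ∑ a, ∑ b, f a p b c e := by
    intro f
    rw [← expand5 (fun a p b c e => f a p b c e),
        ← expand5 (fun p c e a b => f a p b c e)]
    exact Fintype.sum_equiv
      ⟨fun x => (x.2.1, x.2.2.2.1, x.2.2.2.2, x.1, x.2.2.1),
       fun y => (y.2.2.2.1, y.1, y.2.2.2.2, y.2.1, y.2.2.1),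
       fun x => rfl, fun y => rfl⟩ _ _ (fun x => rfl)
  have reorder2 : ∀ f : Fin n → Fin n → Fin n → Fin n → Fin n → B,
      (∑ p, ∑ c, ∑ e, ∑ a, ∑ b, f p c e a b) =
      ∑ b, ∑ e, ∑ a, ∑ c, ∑ p, f p c e a b := by
    intro f
    rw [← expand5 (fun p c e a b => f p c e a b),
        ← expand5 (fun b e a c p => f p c e a b)]
    exact Fintype.sum_equiv
      ⟨fun x => (x.2.2.2.2, x.2.2.1, x.2.2.2.1, x.2.1, x.1),
       fun y => (y.2.2.2.2, y.2.2.2.1, y.2.1, y.2.2.1, y.1),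
       fun x => rfl, fun y => rfl⟩ _ _ (fun x => rfl)
  have key : ∀ a : Fin n, d i₁ a * t j₀ j₁ =
      (if i₁ = j₁ ∧ j₀ = a then (1 : B) else 0) +
      ∑ p, ∑ b, ∑ c, ∑ e,
        (R (p, j₀) (a, b) * R (c, i₁) (j₁, e)) • (t b c * d e p) := by
    intro a
    have h := hweyl a i₁ j₀ j₁
    rw [sub_eq_iff_eq_add] at h
    exact h
  have ht2 : ∀ (p c : Fin n) (z : B) (s : k),
      (∑ a, ∑ b, (R (p, j₀) (a, b) * s) • (t a i₀ * (t b c * z))) =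
      ∑ a, ∑ b, (R (a, b) (i₀, c) * s) • (t j₀ b * (t p a * z)) := by
    intro p c z s
    have e1 : ∀ (q : k) (x y : B),
        (q * s) • (x * (y * z)) = s • ((q • (x * y)) * z) := by
      intro q x y
      rw [mul_comm q s, mul_smul, smul_mul_assoc, mul_assoc]
    simp only [e1]
    simp only [← Finset.sum_mul, ← Finset.smul_sum]
    rw [ht p j₀ i₀ c]
  have delta : (∑ a, if i₁ = j₁ ∧ j₀ = a then t a i₀ else 0) =
      if i₁ = j₁ then t j₀ i₀ else 0 := by
    by_cases h : i₁ = j₁ <;> simp [h, Finset.sum_ite_eq]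
  have main : (∑ a, ∑ p, ∑ b, ∑ c, ∑ e,
        (R (p, j₀) (a, b) * R (c, i₁) (j₁, e)) • (t a i₀ * (t b c * d e p))) =
      ∑ a, ∑ b, ∑ c, ∑ e,
        (R (c, a) (i₀, e) * R (e, i₁) (j₁, b)) • (t j₀ a * D b c) := by
    rw [reorder1]
    calc (∑ p, ∑ c, ∑ e, ∑ a, ∑ b,
            (R (p, j₀) (a, b) * R (c, i₁) (j₁, e)) • (t a i₀ * (t b c * d e p)))
        = ∑ p, ∑ c, ∑ e, ∑ a, ∑ b,
            (R (a, b) (i₀, c) * R (c, i₁) (j₁, e)) • (t j₀ b * (t p a * d e p)) := by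
          refine Finset.sum_congr rfl fun p _ => Finset.sum_congr rfl fun c _ =>
            Finset.sum_congr rfl fun e _ => ?_
          exact ht2 p c (d e p) (R (c, i₁) (j₁, e))
      _ = ∑ b, ∑ e, ∑ a, ∑ c, ∑ p,
            (R (a, b) (i₀, c) * R (c, i₁) (j₁, e)) • (t j₀ b * (t p a * d e p)) :=
          reorder2 (fun p c e a b =>
            (R (a, b) (i₀, c) * R (c, i₁) (j₁, e)) • (t j₀ b * (t p a * d e p)))
      _ = ∑ a, ∑ b, ∑ c, ∑ e,
            (R (c, a) (i₀, e) * R (e, i₁) (j₁, b)) • (t j₀ a * D b c) := by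
          simp only [hD, Finset.mul_sum, Finset.smul_sum]
  calc D i₁ i₀ * t j₀ j₁
      = ∑ a, t a i₀ * (d i₁ a * t j₀ j₁) := by
        rw [hD, Finset.sum_mul]
        exact Finset.sum_congr rfl fun a _ => mul_assoc _ _ _
    _ = (∑ a, (if i₁ = j₁ ∧ j₀ = a then t a i₀ else 0)) +
        ∑ a, ∑ p, ∑ b, ∑ c, ∑ e,
          (R (p, j₀) (a, b) * R (c, i₁) (j₁, e)) • (t a i₀ * (t b c * d e p)) := by
        rw [← Finset.sum_add_distrib]
        refine Finset.sum_congr rfl fun a _ => ?_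
        rw [key a, mul_add]
        congr 1
        · simp
        · simp only [Finset.mul_sum, mul_smul_comm]
    _ = (if i₁ = j₁ then t j₀ i₀ else 0) +
          ∑ a, ∑ b, ∑ c, ∑ e,
            (R (c, a) (i₀, e) * R (e, i₁) (j₁, b)) • (t j₀ a * D b c) := by
        rw [main, delta]
end

section
/- Let R be an invertible n²×n² matrix over a field k satisfying the quantum Yang–Baxter equation, Hecke with parameter q, and with invertible second-transpose-inverse R̃ := ((R^{t₂})⁻¹)^{t₂}. Let B be an associative unital k-algebra containing elements x₁,…,x_n and d¹,…,dⁿ such that: (i) q x_i x_j = Σ_{a,b} x_b x_a R^a_i{}^b_j (the quantum plane relations of A(q:R)); (ii) q d^i d^j = Σ_{a,b} R^i_a{}^j_b d^b d^a; and (iii) the Heisenberg–Weyl relations d^i x_j − Σ_{a,b} q R^a_j{}^i_b x_a d^b = δ^i_j. Define D^i_j := x_j d^i. Then for all multi-indices I = (i₀,i₁), J = (j₀,j₁), writing D^I = D^{i₁}_{i₀}: D^I D^J − Σ_{A,B} Ψ'^I_A{}^J_B D^B D^A = D^{j₁}_{i₀} δ^{i₁}_{j₀} − Σ_{A,B} Ψ'^I_A{}^J_B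 D^{a₁}_{b₀} δ^{b₁}_{a₀}, where Ψ'^I_K{}^J_L := Σ_{a,b,c,e} (R⁻¹)^{l₀}_e{}^c_{i₀} · R^e_{j₀}{}^{i₁}_a · R^a_{k₁}{}^{j₁}_b · R̃^{k₀}_c{}^b_{l₁}. (This is Corollary 4.2: the rotational vector fields x_j ∂^i induced by the coaction x ↦ x t of A(R) on the quantum plane obey the braided-Lie algebra relations of Proposition 3.4.) -/
open Matrix

/-- Transposition in the second tensor factor: `(M^{t₂})^i_j{}^k_l = M^i_j{}^l_k`,
with the convention `M^i_j{}^k_l = M (i,k) (j,l)`. -/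
def t2 {k : Type*} [Field k] {ι : Type*}
    (M : Matrix (ι × ι) (ι × ι) k) : Matrix (ι × ι) (ι × ι) k :=
  fun p q => M (p.1, q.2) (q.1, p.2)

/-- The braided-matrix relation coefficients
`Ψ'^I_K{}^J_L = Σ (R⁻¹)^{l₀}_e{}^c_{i₀} · R^e_{j₀}{}^{i₁}_a · R^a_{k₁}{}^{j₁}_b · R̃^{k₀}_c{}^b_{l₁}`,
with `I = (i₀,i₁)` etc and `R^i_j{}^k_l = R (i,k) (j,l)`. -/
def Psi' {k : Type*} [Field k] {n : ℕ}
    (R Rinv Rtilde : Matrix (Fin n × Fin n) (Fin n × Fin n) k)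
    (I K J L : Fin n × Fin n) : k :=
  ∑ a, ∑ b, ∑ c, ∑ e,
    Rinv (L.1, c) (e, I.1) * R (e, I.2) (J.1, a) *
      R (a, J.2) (K.2, b) * Rtilde (K.1, b) (c, L.2)

section Aux

variable {M : Type*} [AddCommMonoid M]

private lemma sumIn2 {α β γ : Type*} [Fintype α] [Fintype β] [Fintype γ]
    (f : α → β → γ → M) :
    ∑ a, ∑ b, ∑ c, f a b c = ∑ b, ∑ c, ∑ a, f a b c := by
  rw [Finset.sum_comm]
  exact Finset.sum_congr rfl fun b _ => Finset.sum_comm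

private lemma sumIn3 {α β γ δ : Type*} [Fintype α] [Fintype β] [Fintype γ] [Fintype δ]
    (f : α → β → γ → δ → M) :
    ∑ a, ∑ b, ∑ c, ∑ d, f a b c d = ∑ b, ∑ c, ∑ d, ∑ a, f a b c d := by
  rw [Finset.sum_comm]
  exact Finset.sum_congr rfl fun b _ => sumIn2 _

private lemma sumIn4 {α β γ δ ε : Type*} [Fintype α] [Fintype β] [Fintype γ] [Fintype δ]
    [Fintype ε] (f : α → β → γ → δ → ε → M) :
    ∑ a, ∑ b, ∑ c, ∑ d, ∑ e, f a b c d e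
      = ∑ b, ∑ c, ∑ d, ∑ e, ∑ a, f a b c d e := by
  rw [Finset.sum_comm]
  exact Finset.sum_congr rfl fun b _ => sumIn3 _

private lemma sumIn5 {α β γ δ ε ζ : Type*} [Fintype α] [Fintype β] [Fintype γ] [Fintype δ]
    [Fintype ε] [Fintype ζ] (f : α → β → γ → δ → ε → ζ → M) :
    ∑ a, ∑ b, ∑ c, ∑ d, ∑ e, ∑ g, f a b c d e g
      = ∑ b, ∑ c, ∑ d, ∑ e, ∑ g, ∑ a, f a b c d e g := by
  rw [Finset.sum_comm]
  exact Finset.sum_congr rfl fun b _ => sumIn4 _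

end Aux

/-- **Corollary 4.2.** The rotational vector fields `D^i_j = x_j d^i` induced by the
coaction `x ↦ x t` of `A(R)` on the quantum plane `A(q:R)` obey the braided-Lie
algebra relations of Proposition 3.4 with relation matrix `Ψ'`. -/
theorem rotational_vector_fields_relations
    {k : Type*} [Field k] {B : Type*} [Ring B] [Algebra k B] {n : ℕ}
    (R Rinv Rtilde : Matrix (Fin n × Fin n) (Fin n × Fin n) k)
    (q : k) (hq : q ≠ 0)
    (hQYBE : QYBE R)
    (hHecke : (permMat k (Fin n) * R - q • 1) * (permMat k (Fin n) * R + q⁻¹ • 1) = 0)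
    (hinv : R * Rinv = 1) (hinv' : Rinv * R = 1)
    (htilde : t2 R * t2 Rtilde = 1) (htilde' : t2 Rtilde * t2 R = 1)
    (x d : Fin n → B)
    (hx : ∀ i j, q • (x i * x j) = ∑ a, ∑ b, R (a, b) (i, j) • (x b * x a))
    (hd : ∀ i j, q • (d i * d j) = ∑ a, ∑ b, R (i, j) (a, b) • (d b * d a))
    (hweyl : ∀ i j, d i * x j -
        (∑ a, ∑ b, (q * R (a, i) (j, b)) • (x a * d b)) = if i = j then 1 else 0)
    (D : Fin n → Fin n → B)
    (hD : ∀ i j, D i j = x j * d i) :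
    ∀ I J : Fin n × Fin n,
      D I.2 I.1 * D J.2 J.1 -
        (∑ X : Fin n × Fin n, ∑ Y : Fin n × Fin n,
          Psi' R Rinv Rtilde I X J Y • (D Y.2 Y.1 * D X.2 X.1)) =
      (if I.2 = J.1 then D J.2 I.1 else 0) -
        (∑ X : Fin n × Fin n, ∑ Y : Fin n × Fin n,
          Psi' R Rinv Rtilde I X J Y • (if Y.2 = X.1 then D X.2 Y.1 else 0)) := by
  classical
  -- Weyl relation in additive form
  have hA : ∀ i j, d i * x j
      = (if i = j then (1:B) else 0)
        + ∑ a, ∑ b, (q * R (a, i) (j, b)) • (x a * d b) := fun i j =>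
    sub_eq_iff_eq_add.mp (hweyl i j)
  -- product of two rotational generators
  have hB : ∀ p1 p2 r1 r2 : Fin n,
      x p1 * d p2 * (x r1 * d r2)
        = (if p2 = r1 then x p1 * d r2 else 0)
          + ∑ u, ∑ v, (q * R (u, p2) (r1, v)) • (x p1 * x u * (d v * d r2)) := by
    intro p1 p2 r1 r2
    have h0 : x p1 * d p2 * (x r1 * d r2) = x p1 * (d p2 * x r1) * d r2 := by
      noncomm_ring
    rw [h0, hA p2 r1]
    simp only [mul_add, add_mul, Finset.mul_sum, Finset.sum_mul, mul_ite, ite_mul,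
      mul_one, one_mul, mul_zero, zero_mul, mul_smul_comm, smul_mul_assoc, mul_assoc]
  -- inverted quantum-plane relation
  have hC : ∀ s t : Fin n, x s * x t
      = q • ∑ e, ∑ f, Rinv (e, f) (t, s) • (x e * x f) := by
    intro s t
    have h :
        q • ∑ e, ∑ f, Rinv (e, f) (t, s) • (x e * x f)
          = x s * x t := by
      calc q • ∑ e, ∑ f, Rinv (e, f) (t, s) • (x e * x f)
          = ∑ e, ∑ f, Rinv (e, f) (t, s) • (q • (x e * x f)) := by
            rw [Finset.smul_sum]
            refine Finset.sum_congr rfl fun e _ => ?_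
            rw [Finset.smul_sum]
            exact Finset.sum_congr rfl fun f _ => smul_comm _ _ _
        _ = ∑ e, ∑ f, Rinv (e, f) (t, s)
              • (∑ a, ∑ b, R (a, b) (e, f) • (x b * x a)) := by
            refine Finset.sum_congr rfl fun e _ => Finset.sum_congr rfl fun f _ => ?_
            rw [hx]
        _ = ∑ e, ∑ f, ∑ a, ∑ b,
              (R (a, b) (e, f) * Rinv (e, f) (t, s)) • (x b * x a) := by
            refine Finset.sum_congr rfl fun e _ => Finset.sum_congr rfl fun f _ => ?_
            rw [Finset.smul_sum]
            refine Finset.sum_congr rfl fun a _ => ?_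
            rw [Finset.smul_sum]
            refine Finset.sum_congr rfl fun b _ => ?_
            rw [smul_smul, mul_comm]
        _ = ∑ a, ∑ b, ∑ e, ∑ f,
              (R (a, b) (e, f) * Rinv (e, f) (t, s)) • (x b * x a) := by
            refine (sumIn3 _).trans ?_
            refine (sumIn2 _).trans ?_
            exact Finset.sum_congr rfl fun a _ =>
              Finset.sum_congr rfl fun b _ => Finset.sum_comm
        _ = ∑ a, ∑ b, ((R * Rinv) (a, b) (t, s)) • (x b * x a) := by
            refine Finset.sum_congr rfl fun a _ => Finset.sum_congr rfl fun b _ => ?_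
            rw [Matrix.mul_apply, Fintype.sum_prod_type]
            simp only [← Finset.sum_smul]
        _ = x s * x t := by
            rw [hinv]
            simp [Matrix.one_apply, Prod.ext_iff, ite_and, ite_smul,
              Finset.sum_ite_irrel, Finset.sum_ite_eq]
    exact h.symm
  -- contraction of R-tilde against R (second-inverse property)
  have hcontr : ∀ b c u v : Fin n,
      (∑ x1, ∑ y2, R (u, y2) (x1, v) * Rtilde (x1, b) (c, y2))
        = if u = c ∧ v = b then (1:k) else 0 := by
    intro b c u v
    have h : (t2 R * t2 Rtilde) (u, v) (c, b) = (1 : Matrix _ _ k) (u, v) (c, b) := by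
      rw [htilde]
    rw [Matrix.mul_apply, Fintype.sum_prod_type] at h
    simp only [t2] at h
    rw [h, Matrix.one_apply]
    simp [Prod.ext_iff]
  intro I J
  obtain ⟨i0, i1⟩ := I
  obtain ⟨j0, j1⟩ := J
  simp only [hD]
  -- the scalar coefficient collapse
  have hcoef : ∀ x2 y1 u v : Fin n,
      (∑ x1, ∑ y2,
          Psi' R Rinv Rtilde (i0, i1) (x1, x2) (j0, j1) (y1, y2) * (q * R (u, y2) (x1, v)))
        = ∑ e, ∑ a, Rinv (y1, u) (e, i0) * R (e, i1) (j0, a) * R (a, j1) (x2, v) * q := by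
    intro x2 y1 u v
    calc (∑ x1, ∑ y2,
          Psi' R Rinv Rtilde (i0, i1) (x1, x2) (j0, j1) (y1, y2) * (q * R (u, y2) (x1, v)))
        = ∑ x1, ∑ y2, ∑ a, ∑ b, ∑ c, ∑ e,
            Rinv (y1, c) (e, i0) * R (e, i1) (j0, a) * R (a, j1) (x2, b)
              * Rtilde (x1, b) (c, y2) * (q * R (u, y2) (x1, v)) := by
          simp only [Psi', Finset.sum_mul]
      _ = ∑ a, ∑ b, ∑ c, ∑ e, ∑ x1, ∑ y2,
            Rinv (y1, c) (e, i0) * R (e, i1) (j0, a) * R (a, j1) (x2, b)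
              * Rtilde (x1, b) (c, y2) * (q * R (u, y2) (x1, v)) := by
          refine (sumIn5 _).trans ?_
          refine (sumIn4 _).trans ?_
          exact Finset.sum_congr rfl fun a _ => Finset.sum_congr rfl fun b _ =>
            Finset.sum_congr rfl fun c _ => Finset.sum_congr rfl fun e _ =>
              Finset.sum_comm
      _ = ∑ a, ∑ b, ∑ c, ∑ e,
            (Rinv (y1, c) (e, i0) * R (e, i1) (j0, a) * R (a, j1) (x2, b) * q)
              * (∑ x1, ∑ y2, R (u, y2) (x1, v) * Rtilde (x1, b) (c, y2)) := by
          refine Finset.sum_congr rfl fun a _ => Finset.sum_congr rfl fun b _ =>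
            Finset.sum_congr rfl fun c _ => Finset.sum_congr rfl fun e _ => ?_
          rw [Finset.mul_sum]
          refine Finset.sum_congr rfl fun x1 _ => ?_
          rw [Finset.mul_sum]
          exact Finset.sum_congr rfl fun y2 _ => by ring
      _ = ∑ a, ∑ b, ∑ c, ∑ e,
            (Rinv (y1, c) (e, i0) * R (e, i1) (j0, a) * R (a, j1) (x2, b) * q)
              * (if u = c ∧ v = b then (1:k) else 0) := by
          refine Finset.sum_congr rfl fun a _ => Finset.sum_congr rfl fun b _ =>
            Finset.sum_congr rfl fun c _ => Finset.sum_congr rfl fun e _ => ?_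
          rw [hcontr]
      _ = ∑ e, ∑ a, Rinv (y1, u) (e, i0) * R (e, i1) (j0, a) * R (a, j1) (x2, v) * q := by
          simp only [mul_ite, mul_one, mul_zero, ite_and,
            Finset.sum_ite_irrel, Finset.sum_const_zero, Finset.sum_ite_eq,
            Finset.mem_univ, if_true]
          rw [Finset.sum_comm]
  -- the main quadratic identity
  have key :
      (∑ X : Fin n × Fin n, ∑ Y : Fin n × Fin n,
          Psi' R Rinv Rtilde (i0, i1) X (j0, j1) Y •
            (∑ u, ∑ v, (q * R (u, Y.2) (X.1, v)) • (x Y.1 * x u * (d v * d X.2))))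
        = ∑ u, ∑ v, (q * R (u, i1) (j0, v)) • (x i0 * x u * (d v * d j1)) := by
    calc (∑ X : Fin n × Fin n, ∑ Y : Fin n × Fin n,
          Psi' R Rinv Rtilde (i0, i1) X (j0, j1) Y •
            (∑ u, ∑ v, (q * R (u, Y.2) (X.1, v)) • (x Y.1 * x u * (d v * d X.2))))
        = ∑ x1, ∑ x2, ∑ y1, ∑ y2, ∑ u, ∑ v,
            (Psi' R Rinv Rtilde (i0, i1) (x1, x2) (j0, j1) (y1, y2) * (q * R (u, y2) (x1, v)))
              • (x y1 * x u * (d v * d x2)) := by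
          simp only [Fintype.sum_prod_type, Finset.smul_sum, smul_smul]
      _ = ∑ x2, ∑ y1, ∑ u, ∑ v, ∑ x1, ∑ y2,
            (Psi' R Rinv Rtilde (i0, i1) (x1, x2) (j0, j1) (y1, y2) * (q * R (u, y2) (x1, v)))
              • (x y1 * x u * (d v * d x2)) := by
          refine (sumIn5 _).trans ?_
          exact Finset.sum_congr rfl fun x2 _ => Finset.sum_congr rfl fun y1 _ =>
            sumIn3 _
      _ = ∑ x2, ∑ y1, ∑ u, ∑ v,
            (∑ x1, ∑ y2,
              Psi' R Rinv Rtilde (i0, i1) (x1, x2) (j0, j1) (y1, y2) * (q * R (u, y2) (x1, v)))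
              • (x y1 * x u * (d v * d x2)) := by
          simp only [← Finset.sum_smul]
      _ = ∑ x2, ∑ y1, ∑ u, ∑ v, ∑ e, ∑ a,
            (Rinv (y1, u) (e, i0) * R (e, i1) (j0, a) * R (a, j1) (x2, v) * q)
              • (x y1 * x u * (d v * d x2)) := by
          simp only [hcoef, Finset.sum_smul]
      _ = ∑ y1, ∑ u, ∑ e, ∑ a, ∑ x2, ∑ v,
            (Rinv (y1, u) (e, i0) * R (e, i1) (j0, a) * R (a, j1) (x2, v) * q)
              • (x y1 * x u * (d v * d x2)) := by
          refine (sumIn2 _).trans ?_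
          refine Finset.sum_congr rfl fun y1 _ => Finset.sum_congr rfl fun u _ => ?_
          refine (sumIn3 _).trans ?_
          refine (sumIn2 _).trans ?_
          exact Finset.sum_congr rfl fun e _ => Finset.sum_congr rfl fun a _ =>
            Finset.sum_comm
      _ = ∑ y1, ∑ u, ∑ e, ∑ a,
            (Rinv (y1, u) (e, i0) * R (e, i1) (j0, a) * q)
              • (x y1 * x u * (q • (d a * d j1))) := by
          refine Finset.sum_congr rfl fun y1 _ => Finset.sum_congr rfl fun u _ =>
            Finset.sum_congr rfl fun e _ => Finset.sum_congr rfl fun a _ => ?_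
          rw [hd a j1]
          simp only [Finset.mul_sum, Finset.smul_sum, mul_smul_comm]
          refine Finset.sum_congr rfl fun x2 _ => Finset.sum_congr rfl fun v _ => ?_
          rw [mul_right_comm, smul_smul]
      _ = ∑ e, ∑ a, ∑ y1, ∑ u,
            (Rinv (y1, u) (e, i0) * R (e, i1) (j0, a) * q)
              • (x y1 * x u * (q • (d a * d j1))) := by
          refine (sumIn3 _).trans ?_
          refine (sumIn2 _).trans ?_
          exact Finset.sum_congr rfl fun e _ => Finset.sum_congr rfl fun a _ =>
            Finset.sum_comm
      _ = ∑ e, ∑ a, (q * R (e, i1) (j0, a)) •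
            ((q • ∑ y1, ∑ u, Rinv (y1, u) (e, i0) • (x y1 * x u)) * (d a * d j1)) := by
          refine Finset.sum_congr rfl fun e _ => Finset.sum_congr rfl fun a _ => ?_
          simp only [Finset.smul_sum, Finset.sum_mul, smul_mul_assoc, mul_smul_comm,
            smul_smul]
          refine Finset.sum_congr rfl fun y1 _ => Finset.sum_congr rfl fun u _ => ?_
          congr 1
          ring
      _ = ∑ u, ∑ v, (q * R (u, i1) (j0, v)) • (x i0 * x u * (d v * d j1)) := by
          refine Finset.sum_congr rfl fun e _ => Finset.sum_congr rfl fun a _ => ?_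
          rw [← hC]
  -- assemble
  have main : (∑ X : Fin n × Fin n, ∑ Y : Fin n × Fin n,
        Psi' R Rinv Rtilde (i0, i1) X (j0, j1) Y • (x Y.1 * d Y.2 * (x X.1 * d X.2)))
      = (∑ X : Fin n × Fin n, ∑ Y : Fin n × Fin n,
          Psi' R Rinv Rtilde (i0, i1) X (j0, j1) Y •
            (if Y.2 = X.1 then x Y.1 * d X.2 else 0))
        + (∑ X : Fin n × Fin n, ∑ Y : Fin n × Fin n,
            Psi' R Rinv Rtilde (i0, i1) X (j0, j1) Y •
              (∑ u, ∑ v, (q * R (u, Y.2) (X.1, v)) • (x Y.1 * x u * (d v * d X.2)))) := by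
    rw [← Finset.sum_add_distrib]
    refine Finset.sum_congr rfl fun X _ => ?_
    rw [← Finset.sum_add_distrib]
    refine Finset.sum_congr rfl fun Y _ => ?_
    rw [hB, smul_add]
  rw [hB i0 i1 j0 j1, main, key]
  abel
end

section
/- Let k be a field, q ∈ k with q, q⁻¹ ≠ 0, and let B be an associative unital k-algebra containing elements x, y, ∂ˣ, ∂ʸ satisfying the quantum plane and q-differential calculus relations: yx = qxy; ∂ʸ∂ˣ = q⁻¹∂ˣ∂ʸ; ∂ˣx = 1 + q²x∂ˣ; ∂ˣy = qy∂ˣ; ∂ʸx = qx∂ʸ; ∂ʸy = 1 + q²y∂ʸ + (q²−1)x∂ˣ. Define α := x∂ˣ, β := y∂ˣ, γ := x∂ʸ, δ := y∂ʸ. Then: (i) αβ − q⁻²βα = −q⁻²β; (ii) αγ − q²γα = γ; (iii) βγ − γβ = (1 + (q²−1)α)(δ − q⁻²α); and (iv) α + δ commutes with each of α, β, γ, δ. (These are the relations (bgl2a)–(bgl2b) of the braided gl₂-type algebra of vector fields on the quantum plane, realised by the operators x∂/∂x, y∂/∂x, x∂/∂y, y∂/∂y.) -/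
/-- **Relations (bgl2a)–(bgl2b).** The operators `α = x∂ˣ`, `β = y∂ˣ`, `γ = x∂ʸ`,
`δ = y∂ʸ` built from the quantum plane `yx = qxy` and its covariant differential
calculus satisfy the braided `gl₂`-type relations
`αβ − q⁻²βα = −q⁻²β`, `αγ − q²γα = γ`,
`βγ − γβ = (1 + (q²−1)α)(δ − q⁻²α)`, and `α + δ` is central among `α,β,γ,δ`. -/
theorem braided_gl2_vector_fields_on_quantum_plane
    {k : Type*} [Field k] {B : Type*} [Ring B] [Algebra k B]
    (q : k) (hq : q ≠ 0)
    (x y dx dy : B)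
    (hplane : y * x = q • (x * y))
    (hderiv : dy * dx = q⁻¹ • (dx * dy))
    (hdxx : dx * x = 1 + (q ^ 2) • (x * dx))
    (hdxy : dx * y = q • (y * dx))
    (hdyx : dy * x = q • (x * dy))
    (hdyy : dy * y = 1 + (q ^ 2) • (y * dy) + (q ^ 2 - 1) • (x * dx))
    (α β γ δ : B)
    (hα : α = x * dx) (hβ : β = y * dx) (hγ : γ = x * dy) (hδ : δ = y * dy) :
    (α * β - (q ^ 2)⁻¹ • (β * α) = -((q ^ 2)⁻¹ • β)) ∧
    (α * γ - (q ^ 2) • (γ * α) = γ) ∧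
    (β * γ - γ * β = (1 + (q ^ 2 - 1) • α) * (δ - (q ^ 2)⁻¹ • α)) ∧
    ((α + δ) * α = α * (α + δ) ∧ (α + δ) * β = β * (α + δ) ∧
     (α + δ) * γ = γ * (α + δ) ∧ (α + δ) * δ = δ * (α + δ)) := by
  subst hα hβ hγ hδ
  have Hdxx : ∀ b : B, dx * (x * b) = b + (q ^ 2) • (x * (dx * b)) := by
    intro b
    rw [← mul_assoc, hdxx, add_mul, one_mul, smul_mul_assoc, mul_assoc]
  have Hdxy : ∀ b : B, dx * (y * b) = q • (y * (dx * b)) := by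
    intro b; rw [← mul_assoc, hdxy, smul_mul_assoc, mul_assoc]
  have Hdyx : ∀ b : B, dy * (x * b) = q • (x * (dy * b)) := by
    intro b; rw [← mul_assoc, hdyx, smul_mul_assoc, mul_assoc]
  have Hdyy : ∀ b : B, dy * (y * b) = b + (q ^ 2) • (y * (dy * b)) + (q ^ 2 - 1) • (x * (dx * b)) := by
    intro b
    rw [← mul_assoc, hdyy, add_mul, add_mul, one_mul, smul_mul_assoc, smul_mul_assoc, mul_assoc, mul_assoc]
  have Hyx : ∀ b : B, y * (x * b) = q • (x * (y * b)) := by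
    intro b; rw [← mul_assoc, hplane, smul_mul_assoc, mul_assoc]
  have Hdydx : ∀ b : B, dy * (dx * b) = q⁻¹ • (dx * (dy * b)) := by
    intro b; rw [← mul_assoc, hderiv, smul_mul_assoc, mul_assoc]
  refine ⟨?_, ?_, ?_, ?_, ?_, ?_, ?_⟩ <;>
  · simp only [mul_assoc, mul_add, add_mul, mul_sub, sub_mul, one_mul, mul_one,
      Hdxx, Hdxy, Hdyx, Hdyy, Hyx, Hdydx, hdxx, hdxy, hdyx, hdyy, hplane, hderiv,
      mul_smul_comm, smul_mul_assoc, smul_add, smul_sub, smul_smul]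
    match_scalars <;> field_simp <;> ring
end

section
/- Let R be an n²×n² matrix over a field k and let B be an associative unital k-algebra. Let τ = (τ^i_j) and σ = (σ^i_j) be two n×n matrices of elements of B, each satisfying the FRT relations for R, such that every entry of τ commutes with every entry of σ. For multi-indices I = (i₀,i₁), J = (j₀,j₁) define T^I_J := τ^{j₀}_{i₀} σ^{i₁}_{j₁}. Then the n²×n² matrix T = (T^I_J) of elements of B satisfies the FRT relations for the multi-index matrix 𝐑: Σ_{A,B} 𝐑^I_A{}^J_B T^A_M T^B_N = Σ_{A,B} T^J_B T^I_A 𝐑^A_M{}^B_N for all multi-indices I, J, M, N. (This is the algebra-homomorphism content of the bialgebra map A(𝐑) → A(R)^cop ⊗ A(R), t^{(i₀,i₁)}_{(j₀,j₁)} ↦ τ^{j₀}_{i₀} ⊗ σ^{i₁}_{j₁}.) -/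
open Matrix

/-- Auxiliary: factoring a quadruple sum of products into a product of double sums. -/
lemma prod_sum_aux {B : Type*} [Ring B] {n : ℕ} (f g : Fin n → Fin n → B) :
    (∑ a0 : Fin n, ∑ a1 : Fin n, ∑ b0 : Fin n, ∑ b1 : Fin n, f a0 b0 * g a1 b1)
      = (∑ a0, ∑ b0, f a0 b0) * (∑ a1, ∑ b1, g a1 b1) := by
  rw [Finset.sum_mul]
  refine Finset.sum_congr rfl fun a0 _ => ?_
  rw [Finset.sum_mul]
  conv_lhs => rw [Finset.sum_comm]
  refine Finset.sum_congr rfl fun b0 _ => ?_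
  rw [Finset.mul_sum]
  exact Finset.sum_congr rfl fun a1 _ => (Finset.mul_sum _ _ _).symm

/-- **The bialgebra map `A(𝐑) → A(R)^cop ⊗ A(R)`.** If `τ` and `σ` each satisfy the
FRT relations for `R` and all entries of `τ` commute with all entries of `σ`, then
`T^I_J = τ^{j₀}_{i₀} σ^{i₁}_{j₁}` satisfies the FRT relations for the multi-index
matrix `𝐑`. -/
theorem multiindex_FRT_from_pair
    {k : Type*} [Field k] {B : Type*} [Ring B] [Algebra k B] {n : ℕ}
    (R : Matrix (Fin n × Fin n) (Fin n × Fin n) k)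
    (τ σ : Fin n → Fin n → B)
    (hτ : FRT R τ) (hσ : FRT R σ)
    (hcomm : ∀ i j p l, τ i j * σ p l = σ p l * τ i j)
    (T : Fin n × Fin n → Fin n × Fin n → B)
    (hT : ∀ I J : Fin n × Fin n, T I J = τ J.1 I.1 * σ I.2 J.2) :
    FRT (bigR R) T := by
  intro I J M N
  obtain ⟨i0, i1⟩ := I
  obtain ⟨j0, j1⟩ := J
  obtain ⟨m0, m1⟩ := M
  obtain ⟨n0, n1⟩ := N
  have key : ∀ a b c d e f g h' : Fin n,
      τ a b * σ e f * (τ c d * σ g h') = τ a b * τ c d * (σ e f * σ g h') := by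
    intro a b c d e f g h'
    rw [mul_assoc (τ a b), ← mul_assoc (σ e f), ← hcomm, mul_assoc (τ c d),
      ← mul_assoc (τ a b)]
  have Xl : (∑ a, ∑ b, R (b, a) (j0, i0) • (τ m0 a * τ n0 b))
      = ∑ a, ∑ b, R (n0, m0) (a, b) • (τ a j0 * τ b i0) := by
    rw [Finset.sum_comm]
    exact (hτ n0 m0 j0 i0).symm
  have Xr : (∑ a, ∑ b, R (n0, m0) (b, a) • (τ b j0 * τ a i0))
      = ∑ a, ∑ b, R (n0, m0) (a, b) • (τ a j0 * τ b i0) := by rw [Finset.sum_comm]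
  have Yl : (∑ a, ∑ b, R (i1, j1) (a, b) • (σ a m1 * σ b n1))
      = ∑ a, ∑ b, R (a, b) (m1, n1) • (σ j1 b * σ i1 a) := hσ i1 j1 m1 n1
  calc
    (∑ A : Fin n × Fin n, ∑ C : Fin n × Fin n,
        bigR R ((i0, i1), (j0, j1)) (A, C) • (T A (m0, m1) * T C (n0, n1)))
      = ∑ a0 : Fin n, ∑ a1 : Fin n, ∑ b0 : Fin n, ∑ b1 : Fin n,
          (R (b0, a0) (j0, i0) • (τ m0 a0 * τ n0 b0)) *
          (R (i1, j1) (a1, b1) • (σ a1 m1 * σ b1 n1)) := by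
        simp only [Fintype.sum_prod_type]
        refine Finset.sum_congr rfl fun a0 _ => Finset.sum_congr rfl fun a1 _ =>
          Finset.sum_congr rfl fun b0 _ => Finset.sum_congr rfl fun b1 _ => ?_
        simp only [bigR, hT]
        rw [smul_mul_assoc, mul_smul_comm, smul_smul, key]
    _ = (∑ a, ∑ b, R (b, a) (j0, i0) • (τ m0 a * τ n0 b)) *
        (∑ a, ∑ b, R (i1, j1) (a, b) • (σ a m1 * σ b n1)) :=
      prod_sum_aux _ _
    _ = (∑ a, ∑ b, R (n0, m0) (b, a) • (τ b j0 * τ a i0)) *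
        (∑ a, ∑ b, R (a, b) (m1, n1) • (σ j1 b * σ i1 a)) := by
      rw [Xl, Yl, ← Xr]
    _ = ∑ a0 : Fin n, ∑ a1 : Fin n, ∑ b0 : Fin n, ∑ b1 : Fin n,
          (R (n0, m0) (b0, a0) • (τ b0 j0 * τ a0 i0)) *
          (R (a1, b1) (m1, n1) • (σ j1 b1 * σ i1 a1)) := (prod_sum_aux _ _).symm
    _ = (∑ A : Fin n × Fin n, ∑ C : Fin n × Fin n,
        bigR R (A, C) ((m0, m1), (n0, n1)) • (T (j0, j1) C * T (i0, i1) A)) := by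
        simp only [Fintype.sum_prod_type]
        refine Finset.sum_congr rfl fun a0 _ => Finset.sum_congr rfl fun a1 _ =>
          Finset.sum_congr rfl fun b0 _ => Finset.sum_congr rfl fun b1 _ => ?_
        simp only [bigR, hT]
        rw [smul_mul_assoc, mul_smul_comm, smul_smul, key]
end
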